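/- arXiv:2402.01333 — 2 statements merged into one kernel-verified Lean document; each statement's English description precedes it below -/
import Mathlib

section
/- Let (μ_k)_{k∈ℕ} be a probability distribution on ℕ satisfying: there exist γ, δ ∈ (0,1] such that limsup_{ε↓0} ε^{−(1−γ)} Σ_k μ_k 1{μ_k ≤ ε} < ∞ and limsup_{ε↓0} ε^δ Σ_k 1{μ_k > ε} < ∞. Then limsup_{N→∞} N^{−(γ∨δ)} Σ_{k∈ℕ}[1 − (1 − μ_k)^N] < ∞. -/
open Filter

theorem stmt_4 (μ : ℕ → ℝ) (hμnn : ∀ k, 0 ≤ μ k) (hμsum : ∑' k, μ k = 1)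
    (γ δ : ℝ) (hγ : γ ∈ Set.Ioc (0 : ℝ) 1) (hδ : δ ∈ Set.Ioc (0 : ℝ) 1)
    (h1 : ∃ C : ℝ, ∀ᶠ ε in nhdsWithin 0 (Set.Ioi (0 : ℝ)),
      ε ^ (-(1 - γ)) * (∑' k, if μ k ≤ ε then μ k else 0) ≤ C)
    (h2 : ∃ C : ℝ, ∀ᶠ ε in nhdsWithin 0 (Set.Ioi (0 : ℝ)),
      ε ^ δ * (∑' k, if ε < μ k then (1 : ℝ) else 0) ≤ C) :
    ∃ C : ℝ, ∀ᶠ N : ℕ in Filter.atTop,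
      (N : ℝ) ^ (-(max γ δ)) * ∑' k, (1 - (1 - μ k) ^ N) ≤ C := by
  obtain ⟨C1, h1⟩ := h1
  obtain ⟨C2, h2⟩ := h2
  have hμs : Summable μ := by
    by_contra h
    rw [tsum_eq_zero_of_not_summable h] at hμsum
    norm_num at hμsum
  have hμ1 : ∀ k, μ k ≤ 1 := by
    intro k
    calc μ k ≤ ∑' j, μ j := Summable.le_tsum hμs k fun j _ => hμnn j
    _ = 1 := hμsum
  have htend : Tendsto (fun N : ℕ => ((N : ℝ))⁻¹) atTop (nhdsWithin 0 (Set.Ioi 0)) := by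
    apply tendsto_nhdsWithin_of_tendsto_nhds_of_eventually_within
    · exact tendsto_inv_atTop_zero.comp tendsto_natCast_atTop_atTop
    · filter_upwards [eventually_ge_atTop 1] with N hN
      have hN0 : (0 : ℝ) < N := by exact_mod_cast hN
      exact Set.mem_Ioi.2 (inv_pos.2 hN0)
  refine ⟨max C1 0 + max C2 0, ?_⟩
  filter_upwards [htend.eventually h1, htend.eventually h2, eventually_ge_atTop 1]
    with N hA hB hN1
  set x : ℝ := (N : ℝ) with hxdef
  have hx1 : (1 : ℝ) ≤ x := by rw [hxdef]; exact_mod_cast hN1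
  have hx0 : (0 : ℝ) < x := lt_of_lt_of_le one_pos hx1
  set ε : ℝ := x⁻¹ with hεdef
  have hε0 : 0 < ε := inv_pos.2 hx0
  set f : ℕ → ℝ := fun k => 1 - (1 - μ k) ^ N with hfdef
  have hf0 : ∀ k, 0 ≤ f k := by
    intro k
    have h := pow_le_one₀ (by linarith [hμ1 k] : (0:ℝ) ≤ 1 - μ k) (by linarith [hμnn k]) (n := N)
    simp only [hfdef]
    linarith
  have hfμ : ∀ k, f k ≤ x * μ k := by
    intro k
    have h := one_add_mul_le_pow (a := -μ k) (by linarith [hμ1 k]) N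
    have he : (1 : ℝ) + -μ k = 1 - μ k := by ring
    rw [he] at h
    simp only [hfdef]
    nlinarith
  have hf1 : ∀ k, f k ≤ 1 := by
    intro k
    have h : (0 : ℝ) ≤ (1 - μ k) ^ N := pow_nonneg (by linarith [hμ1 k]) N
    simp only [hfdef]
    linarith
  have hfs : Summable f := by
    apply Summable.of_nonneg_of_le hf0 hfμ (hμs.mul_left x)
  have hsA : Summable (fun k => if μ k ≤ ε then f k else 0) := by
    apply Summable.of_nonneg_of_le _ _ hfs <;> intro k <;> split
    · exact hf0 k
    · exact le_refl 0
    · exact le_refl _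
    · exact hf0 k
  have hsμA : Summable (fun k => if μ k ≤ ε then μ k else 0) := by
    apply Summable.of_nonneg_of_le _ _ hμs <;> intro k <;> split
    · exact hμnn k
    · exact le_refl 0
    · exact le_refl _
    · exact hμnn k
  have hfin : {k | ε < μ k}.Finite := by
    have hcof : ∀ᶠ k in cofinite, μ k < ε :=
      hμs.tendsto_cofinite_zero.eventually (eventually_lt_nhds hε0)
    exact (Filter.eventually_cofinite.mp hcof).subset fun k hk => not_lt.2 (le_of_lt hk)
  have hsB1 : Summable (fun k => if ε < μ k then (1 : ℝ) else 0) := by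
    apply summable_of_ne_finset_zero (s := hfin.toFinset)
    intro k hk
    rw [Set.Finite.mem_toFinset] at hk
    simp only [Set.mem_setOf_eq] at hk
    simp [hk]
  have hsB : Summable (fun k => if ε < μ k then f k else 0) := by
    apply Summable.of_nonneg_of_le _ _ hsB1 <;> intro k <;> split
    · exact hf0 k
    · exact le_refl 0
    · exact hf1 k
    · exact le_refl 0
  have hsplit : ∑' k, f k = (∑' k, if μ k ≤ ε then f k else 0)
      + (∑' k, if ε < μ k then f k else 0) := by
    rw [← Summable.tsum_add hsA hsB]
    congr 1
    ext k
    by_cases h : μ k ≤ ε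
    · simp [h, not_lt.2 h]
    · simp [h, not_le.1 h]
  have hA' : (∑' k, if μ k ≤ ε then f k else 0)
      ≤ x * ∑' k, (if μ k ≤ ε then μ k else 0) := by
    rw [← tsum_mul_left]
    apply Summable.tsum_le_tsum _ hsA (hsμA.mul_left x)
    intro k
    by_cases h : μ k ≤ ε
    · simpa [h] using hfμ k
    · simp [h]
  have hB' : (∑' k, if ε < μ k then f k else 0)
      ≤ ∑' k, (if ε < μ k then (1 : ℝ) else 0) := by
    apply Summable.tsum_le_tsum _ hsB hsB1
    intro k
    by_cases h : ε < μ k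
    · simpa [h] using hf1 k
    · simp [h]
  -- deduce bounds from the hypotheses
  have hAv : (∑' k, if μ k ≤ ε then μ k else 0) ≤ C1 * ε ^ ((1:ℝ) - γ) := by
    have hp : (0:ℝ) < ε ^ ((1:ℝ) - γ) := Real.rpow_pos_of_pos hε0 _
    have h := mul_le_mul_of_nonneg_left hA hp.le
    rw [← mul_assoc, ← Real.rpow_add hε0] at h
    simp only [add_neg_cancel, Real.rpow_zero, one_mul] at h
    linarith [h, mul_comm (ε ^ ((1:ℝ) - γ)) C1]
  have hBv : (∑' k, if ε < μ k then (1:ℝ) else 0) ≤ C2 * ε ^ (-δ) := by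
    have hp : (0:ℝ) < ε ^ (-δ) := Real.rpow_pos_of_pos hε0 _
    have h := mul_le_mul_of_nonneg_left hB hp.le
    rw [← mul_assoc, ← Real.rpow_add hε0] at h
    simp only [neg_add_cancel, Real.rpow_zero, one_mul] at h
    linarith [h, mul_comm (ε ^ (-δ)) C2]
  have ex1 : x * ε ^ ((1:ℝ) - γ) = x ^ γ := by
    rw [hεdef, Real.inv_rpow hx0.le, ← Real.rpow_neg hx0.le]
    nth_rewrite 1 [← Real.rpow_one x]
    rw [← Real.rpow_add hx0]
    congr 1
    ring
  have ex2 : ε ^ (-δ) = x ^ δ := by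
    rw [hεdef, Real.inv_rpow hx0.le, ← Real.rpow_neg hx0.le, neg_neg]
  have hS : ∑' k, f k ≤ C1 * x ^ γ + C2 * x ^ δ := by
    rw [hsplit]
    have t1 : (∑' k, if μ k ≤ ε then f k else 0) ≤ C1 * x ^ γ := by
      calc (∑' k, if μ k ≤ ε then f k else 0)
          ≤ x * ∑' k, (if μ k ≤ ε then μ k else 0) := hA'
        _ ≤ x * (C1 * ε ^ ((1:ℝ) - γ)) := mul_le_mul_of_nonneg_left hAv hx0.le
        _ = C1 * (x * ε ^ ((1:ℝ) - γ)) := by ring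
        _ = C1 * x ^ γ := by rw [ex1]
    have t2 : (∑' k, if ε < μ k then f k else 0) ≤ C2 * x ^ δ := by
      refine hB'.trans ?_
      rw [← ex2]
      exact hBv
    linarith
  set m : ℝ := max γ δ with hmdef
  have hγm : x ^ γ ≤ x ^ m := Real.rpow_le_rpow_of_exponent_le hx1 (le_max_left _ _)
  have hδm : x ^ δ ≤ x ^ m := Real.rpow_le_rpow_of_exponent_le hx1 (le_max_right _ _)
  have hC1 : C1 * x ^ γ ≤ max C1 0 * x ^ m :=
    mul_le_mul (le_max_left _ _) hγm (Real.rpow_pos_of_pos hx0 γ).le (le_max_right _ _)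
  have hC2 : C2 * x ^ δ ≤ max C2 0 * x ^ m :=
    mul_le_mul (le_max_left _ _) hδm (Real.rpow_pos_of_pos hx0 δ).le (le_max_right _ _)
  have hS2 : ∑' k, f k ≤ (max C1 0 + max C2 0) * x ^ m := by
    have := (add_mul (max C1 0) (max C2 0) (x ^ m)).symm
    linarith
  have hxm : (0:ℝ) < x ^ (-m) := Real.rpow_pos_of_pos hx0 _
  calc x ^ (-m) * ∑' k, f k
      ≤ x ^ (-m) * ((max C1 0 + max C2 0) * x ^ m) :=
        mul_le_mul_of_nonneg_left hS2 hxm.le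
    _ = (max C1 0 + max C2 0) * (x ^ (-m) * x ^ m) := by ring
    _ = max C1 0 + max C2 0 := by
        rw [← Real.rpow_add hx0]
        simp
end

section
/- Let (μ_k)_{k∈ℕ} be a probability distribution on ℕ with μ_k ≍ k^{−χ} as k → ∞ for some χ > 1 (i.e., there exist constants 0 < c ≤ C such that c k^{−χ} ≤ μ_k ≤ C k^{−χ} for all large k). Then for every υ > 1 there exists a constant C₃ > 0 such that Σ_{k∈ℕ}[1 − (1−μ_k)^N] ≤ C₃ N^{υ/(χ−1)} for all N ∈ ℕ. -/
lemma aux_min_one_le_rpow {y θ : ℝ} (hy : 0 ≤ y) (hθpos : 0 < θ) (hθ1 : θ ≤ 1) :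
    min 1 y ≤ y ^ θ := by
  rcases le_or_gt 1 y with h | h
  · rw [min_eq_left h]
    calc (1:ℝ) = y ^ (0:ℝ) := (Real.rpow_zero y).symm
      _ ≤ y ^ θ := Real.rpow_le_rpow_of_exponent_le h hθpos.le
  · rw [min_eq_right h.le]
    rcases eq_or_lt_of_le hy with h0 | h0
    · rw [← h0, Real.zero_rpow (ne_of_gt hθpos)]
    · calc y = y ^ (1:ℝ) := (Real.rpow_one y).symm
        _ ≤ y ^ θ := Real.rpow_le_rpow_of_exponent_ge h0 h.le hθ1

lemma aux_bernoulli {x : ℝ} (h1 : x ≤ 1) (N : ℕ) : 1 - (1 - x) ^ N ≤ (N : ℝ) * x := by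
  have hb : (-2:ℝ) ≤ -x := by linarith
  have h := one_add_mul_le_pow hb N
  rw [show (1:ℝ) + -x = 1 - x by ring] at h
  nlinarith

lemma aux_pow_split {N C x χ θ : ℝ} (hN : 0 ≤ N) (hC : 0 ≤ C) (hx : 0 < x) :
    (N * (C * x ^ (-χ))) ^ θ = N ^ θ * C ^ θ * x ^ (-(χ * θ)) := by
  rw [Real.mul_rpow hN (by positivity), Real.mul_rpow hC (Real.rpow_nonneg hx.le _),
    show -(χ * θ) = (-χ) * θ by ring, Real.rpow_mul hx.le, mul_assoc]

set_option maxHeartbeats 1000000 in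
theorem stmt_5 (μ : ℕ → ℝ) (hμnn : ∀ k, 0 ≤ μ k) (hμsum : ∑' k, μ k = 1)
    (χ : ℝ) (hχ : 1 < χ)
    (hasymp : ∃ c C : ℝ, 0 < c ∧ c ≤ C ∧ ∃ K : ℕ, ∀ k : ℕ, K ≤ k →
      c * (k : ℝ) ^ (-χ) ≤ μ k ∧ μ k ≤ C * (k : ℝ) ^ (-χ)) :
    ∀ υ : ℝ, 1 < υ → ∃ C₃ : ℝ, 0 < C₃ ∧ ∀ N : ℕ,
      ∑' k, (1 - (1 - μ k) ^ N) ≤ C₃ * (N : ℝ) ^ (υ / (χ - 1)) := by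
  intro υ hυ
  obtain ⟨c, C, hc, hcC, K, hK⟩ := hasymp
  have hC : 0 < C := lt_of_lt_of_le hc hcC
  have hχ1 : 0 < χ - 1 := by linarith
  have hμsumm : Summable μ := by
    by_contra h
    rw [tsum_eq_zero_of_not_summable h] at hμsum
    norm_num at hμsum
  have hμle1 : ∀ k, μ k ≤ 1 := by
    intro k
    calc μ k ≤ ∑' j, μ j := Summable.le_tsum hμsumm k (fun j _ => hμnn j)
      _ = 1 := hμsum
  set θ : ℝ := min 1 (υ / (χ - 1)) with hθdef
  have hθpos : 0 < θ := lt_min one_pos (div_pos (by linarith) hχ1)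
  have hθ1 : θ ≤ 1 := min_le_left _ _
  have hθle : θ ≤ υ / (χ - 1) := min_le_right _ _
  have hχpos : (0:ℝ) < χ := by linarith
  have hχθ : 1 < χ * θ := by
    have h1 : 1/χ < 1 := by rw [div_lt_one hχpos]; linarith
    have h2 : 1/χ < υ/(χ-1) := by
      have ha : 1/χ < 1/(χ-1) := by
        apply one_div_lt_one_div_of_lt hχ1; linarith
      have hb : 1/(χ-1) ≤ υ/(χ-1) := by gcongr
      linarith
    have hθgt : 1/χ < θ := lt_min h1 h2
    calc (1:ℝ) = χ * (1/χ) := by field_simp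
      _ < χ * θ := mul_lt_mul_of_pos_left hθgt hχpos
  set K₁ : ℕ := max K 1 with hK₁def
  have hK₁pos : 1 ≤ K₁ := le_max_right _ _
  have hZsumm : Summable (fun k : ℕ => ((k + K₁ : ℕ) : ℝ) ^ (-(χ * θ))) := by
    have hs : Summable (fun n : ℕ => (n : ℝ) ^ (-(χ * θ))) :=
      Real.summable_nat_rpow.mpr (by linarith)
    exact (summable_nat_add_iff K₁).mpr hs
  set Z : ℝ := ∑' k : ℕ, ((k + K₁ : ℕ) : ℝ) ^ (-(χ * θ)) with hZdef
  have hZnn : 0 ≤ Z := tsum_nonneg fun k => Real.rpow_nonneg (by positivity) _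
  have hCθ : (0:ℝ) < C ^ θ := Real.rpow_pos_of_pos hC θ
  refine ⟨(K₁ : ℝ) + C ^ θ * Z + 1, by positivity, ?_⟩
  intro N
  set e : ℝ := υ / (χ - 1) with hedef
  have hepos : 0 < e := div_pos (by linarith) hχ1
  set f : ℕ → ℝ := fun k => 1 - (1 - μ k) ^ N with hfdef
  have h1μ : ∀ k, 0 ≤ 1 - μ k := fun k => by linarith [hμle1 k]
  have hfnn : ∀ k, 0 ≤ f k := by
    intro k
    have : (1 - μ k) ^ N ≤ 1 := pow_le_one₀ (h1μ k) (by linarith [hμnn k])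
    simp only [hfdef]; linarith
  have hfle1 : ∀ k, f k ≤ 1 := by
    intro k
    have : 0 ≤ (1 - μ k) ^ N := pow_nonneg (h1μ k) N
    simp only [hfdef]; linarith
  have hfleN : ∀ k, f k ≤ (N : ℝ) * μ k := fun k => aux_bernoulli (hμle1 k) N
  have hfsumm : Summable f :=
    Summable.of_nonneg_of_le hfnn hfleN (hμsumm.mul_left _)
  rcases Nat.eq_zero_or_pos N with hN | hN
  · subst hN
    have hf0 : f = fun _ => (0:ℝ) := by funext k; simp [hfdef]
    rw [show (∑' k, (1 - (1 - μ k) ^ 0)) = ∑' k, f k from rfl, hf0]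
    simp only [tsum_zero]
    rw [Nat.cast_zero, Real.zero_rpow (by positivity : e ≠ 0)]
    positivity
  · have hN1 : (1:ℝ) ≤ (N : ℝ) := by exact_mod_cast hN
    have hterm : ∀ i : ℕ, f (i + K₁) ≤ (N:ℝ)^θ * C^θ * ((i + K₁ : ℕ) : ℝ) ^ (-(χ * θ)) := by
      intro i
      have hkK : K ≤ i + K₁ := le_trans (le_max_left _ _) (Nat.le_add_left _ _)
      have hkpos : (0:ℝ) < ((i + K₁ : ℕ):ℝ) := by
        have : 1 ≤ i + K₁ := le_trans hK₁pos (Nat.le_add_left _ _)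
        exact_mod_cast this
      have hμk : μ (i + K₁) ≤ C * ((i + K₁ : ℕ):ℝ) ^ (-χ) := (hK _ hkK).2
      have hynn : 0 ≤ (N:ℝ) * μ (i + K₁) := mul_nonneg (Nat.cast_nonneg N) (hμnn _)
      calc f (i + K₁) ≤ min 1 ((N:ℝ) * μ (i + K₁)) := le_min (hfle1 _) (hfleN _)
        _ ≤ ((N:ℝ) * μ (i + K₁)) ^ θ := aux_min_one_le_rpow hynn hθpos hθ1
        _ ≤ ((N:ℝ) * (C * ((i + K₁ : ℕ):ℝ) ^ (-χ))) ^ θ :=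
          Real.rpow_le_rpow hynn
            (mul_le_mul_of_nonneg_left hμk (Nat.cast_nonneg N)) hθpos.le
        _ = (N:ℝ)^θ * C^θ * ((i + K₁ : ℕ) : ℝ) ^ (-(χ * θ)) :=
          aux_pow_split (χ := χ) (θ := θ) (Nat.cast_nonneg N) hC.le hkpos
    have htailsumm : Summable (fun i : ℕ => f (i + K₁)) :=
      (summable_nat_add_iff K₁).mpr hfsumm
    have htail : (∑' i : ℕ, f (i + K₁)) ≤ (N:ℝ)^θ * C^θ * Z := by
      rw [hZdef, ← tsum_mul_left]
      exact Summable.tsum_le_tsum hterm htailsumm (hZsumm.mul_left _)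
    have hhead : (∑ i ∈ Finset.range K₁, f i) ≤ (K₁ : ℝ) := by
      calc (∑ i ∈ Finset.range K₁, f i) ≤ ∑ _i ∈ Finset.range K₁, (1:ℝ) :=
          Finset.sum_le_sum (fun i _ => hfle1 i)
        _ = (K₁ : ℝ) := by simp
    have hsplitsum : (∑' k, f k)
        = (∑ i ∈ Finset.range K₁, f i) + ∑' i : ℕ, f (i + K₁) :=
      (Summable.sum_add_tsum_nat_add K₁ hfsumm).symm
    have hNe1 : (1:ℝ) ≤ (N:ℝ) ^ e := by
      calc (1:ℝ) = (N:ℝ) ^ (0:ℝ) := (Real.rpow_zero _).symm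
        _ ≤ (N:ℝ) ^ e := Real.rpow_le_rpow_of_exponent_le hN1 hepos.le
    have hNθe : (N:ℝ) ^ θ ≤ (N:ℝ) ^ e := Real.rpow_le_rpow_of_exponent_le hN1 hθle
    have hCZ : (0:ℝ) ≤ C^θ * Z := mul_nonneg hCθ.le hZnn
    have hK₁nn : (0:ℝ) ≤ (K₁:ℝ) := Nat.cast_nonneg _
    have hfinal : (∑' k, f k) ≤ (K₁ : ℝ) + (N:ℝ)^θ * C^θ * Z := by
      rw [hsplitsum]; exact add_le_add hhead htail
    have hstep : (K₁ : ℝ) + (N:ℝ)^θ * C^θ * Z ≤ ((K₁ : ℝ) + C ^ θ * Z + 1) * (N:ℝ) ^ e := by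
      nlinarith [mul_le_mul_of_nonneg_right hNθe hCZ]
    linarith
end
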